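/- Let G be a finite connected C4-free Helly graph, let s be an arbitrary vertex, let v ∈ F(s) be a vertex most distant from s, and let (x,y) be a diametral pair of G. If max{dist(v,x), dist(v,y)} ≤ 2k for some nonnegative integer k, then diam(G) ≤ 2k + 1. -/

import Mathlib

/-!
Suppose `diam G = d(x,y) ≥ 2k + 2`. Since `v` is within `2k` of both `x` and `y`, the Helly
property gives a vertex `w` halfway between `x` and `y` with `d(v,w) ≤ k - 1`; as `v` is
farthest from `s`, `w` is then so far from `s` that it has a neighbour `c₁` one step closer to
both `s` and `x`, and a neighbour `c₂` one step closer to both `s` and `y`. Then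
`d(c₁,c₂) = 2`, and a common neighbour of `c₁, c₂` closer to `s` (Helly again) closes an
induced `C₄` through `w`.
-/

open SimpleGraph

variable {V : Type*}

/-- The ball of radius `r` centered at `v`. -/
def gBall (G : SimpleGraph V) (v : V) (r : ℕ) : Set V := {u | G.dist v u ≤ r}

/-- A graph is Helly if every (nonempty) family of pairwise intersecting balls
has a nonempty common intersection. -/
def IsHelly (G : SimpleGraph V) : Prop :=
  ∀ F : Set (V × ℕ), F.Nonempty →
    (∀ p ∈ F, ∀ q ∈ F, (gBall G p.1 p.2 ∩ gBall G q.1 q.2).Nonempty) →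
    (⋂ p ∈ F, gBall G p.1 p.2).Nonempty

/-- The eccentricity of a vertex. -/
noncomputable def ecc (G : SimpleGraph V) [Fintype V] (v : V) : ℕ :=
  Finset.univ.sup (fun u => G.dist v u)

/-- The radius of a graph. -/
noncomputable def grad (G : SimpleGraph V) [Fintype V] : ℕ :=
  sInf (Set.range (ecc G))

/-- The diameter of a graph. -/
noncomputable def gdiam (G : SimpleGraph V) [Fintype V] : ℕ :=
  Finset.univ.sup (ecc G)

/-- The center of a graph: vertices of minimum eccentricity. -/
noncomputable def gcenter (G : SimpleGraph V) [Fintype V] : Set V :=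
  {v | ecc G v = grad G}

/-- Distance from a vertex to a set of vertices. -/
noncomputable def distS (G : SimpleGraph V) (v : V) (S : Set V) : ℕ :=
  sInf (G.dist v '' S)

/-- The metric projection of a vertex onto a set of vertices. -/
noncomputable def proj (G : SimpleGraph V) (v : V) (S : Set V) : Set V :=
  {s ∈ S | G.dist v s = distS G v S}

/-- The slice `L(u,k,v)`: vertices on the metric interval from `u` to `v`
at distance `k` from `u`. -/
def gslice (G : SimpleGraph V) (u : V) (k : ℕ) (v : V) : Set V :=
  {w | G.dist u w = k ∧ G.dist u w + G.dist w v = G.dist u v}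

/-- A graph is `C₄`-free if it has no induced cycle on four vertices. -/
def C4Free (G : SimpleGraph V) : Prop :=
  ¬ ∃ a b c d : V, a ≠ b ∧ a ≠ c ∧ a ≠ d ∧ b ≠ c ∧ b ≠ d ∧ c ≠ d ∧
    G.Adj a b ∧ G.Adj b c ∧ G.Adj c d ∧ G.Adj d a ∧ ¬ G.Adj a c ∧ ¬ G.Adj b d

/-- The open neighbourhood of a set: vertices outside it with a neighbour in it. -/
def nbhdSet (G : SimpleGraph V) (C : Set V) : Set V :=
  {v | v ∉ C ∧ ∃ c ∈ C, G.Adj v c}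

section HellyGraph

variable {G : SimpleGraph V}

lemma dist_le_ecc [Fintype V] (v u : V) : G.dist v u ≤ ecc G v :=
  Finset.le_sup (f := fun u => G.dist v u) (Finset.mem_univ u)

lemma SimpleGraph.Connected.adj_of_dist_le_one (hconn : G.Connected) {u v : V}
    (h : G.dist u v ≤ 1) (hne : u ≠ v) : G.Adj u v := by
  have : G.dist u v ≠ 0 := fun h0 => hne (hconn.dist_eq_zero_iff.mp h0)
  exact dist_eq_one_iff_adj.mp (by omega)

lemma SimpleGraph.Connected.exists_dist_le_of_dist_le_add (hconn : G.Connected) {u v : V}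
    {r₁ r₂ : ℕ} (h : G.dist u v ≤ r₁ + r₂) : ∃ z, G.dist u z ≤ r₁ ∧ G.dist v z ≤ r₂ := by
  obtain ⟨p, hp⟩ := hconn.exists_walk_length_eq_dist u v
  refine ⟨p.getVert r₁, (dist_le (p.take r₁)).trans ?_, ?_⟩
  · simp [Walk.take_length]
  · rw [SimpleGraph.dist_comm]
    refine (dist_le (p.drop r₁)).trans ?_
    rw [Walk.drop_length]
    omega

lemma IsHelly.exists_dist_le₃ (hH : IsHelly G) (hconn : G.Connected) {a b c : V}
    {ra rb rc : ℕ} (hab : G.dist a b ≤ ra + rb) (hac : G.dist a c ≤ ra + rc)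
    (hbc : G.dist b c ≤ rb + rc) :
    ∃ z, G.dist a z ≤ ra ∧ G.dist b z ≤ rb ∧ G.dist c z ≤ rc := by
  have hpair : ∀ p ∈ ({(a, ra), (b, rb), (c, rc)} : Set (V × ℕ)),
      ∀ q ∈ ({(a, ra), (b, rb), (c, rc)} : Set (V × ℕ)), G.dist p.1 q.1 ≤ p.2 + q.2 := by
    simp only [Set.mem_insert_iff, Set.mem_singleton_iff]
    rintro p (rfl | rfl | rfl) q (rfl | rfl | rfl) <;>
      simp only [SimpleGraph.dist_self, SimpleGraph.dist_comm (u := b) (v := a),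
        SimpleGraph.dist_comm (u := c) (v := a), SimpleGraph.dist_comm (u := c) (v := b)] <;>
      omega
  obtain ⟨z, hz⟩ := hH _ (Set.insert_nonempty _ _) fun p hp q hq => by
    obtain ⟨z, hpz, hqz⟩ := hconn.exists_dist_le_of_dist_le_add (hpair p hp q hq)
    exact ⟨z, hpz, hqz⟩
  simp only [Set.mem_iInter, Set.mem_insert_iff, Set.mem_singleton_iff] at hz
  exact ⟨z, hz _ (.inl rfl), hz _ (.inr (.inl rfl)), hz _ (.inr (.inr rfl))⟩

lemma IsHelly.exists_adj_closer_to_both (hH : IsHelly G) (hconn : G.Connected) {x s w : V}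
    (hxw : 1 ≤ G.dist x w) (hfar : G.dist s x + 2 ≤ G.dist x w + G.dist s w) :
    ∃ c, G.Adj w c ∧ G.dist x c + 1 = G.dist x w ∧ G.dist s c + 1 = G.dist s w := by
  have hxsw : G.dist x w ≤ G.dist x s + G.dist s w := hconn.dist_triangle
  rw [SimpleGraph.dist_comm (u := x) (v := s)] at hxsw
  obtain ⟨c, hxc, hwc, hsc⟩ := hH.exists_dist_le₃ hconn (a := x) (b := w) (c := s)
    (ra := G.dist x w - 1) (rb := 1) (rc := G.dist s w - 1) (by omega)
    (by rw [SimpleGraph.dist_comm]; omega) (by rw [SimpleGraph.dist_comm]; omega)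
  have hxcw : G.dist x w ≤ G.dist x c + G.dist c w := hconn.dist_triangle
  have hscw : G.dist s w ≤ G.dist s c + G.dist c w := hconn.dist_triangle
  have hcw : G.dist c w = G.dist w c := SimpleGraph.dist_comm
  have hne : w ≠ c := by
    rintro rfl
    omega
  exact ⟨c, hconn.adj_of_dist_le_one hwc hne, by omega, by omega⟩

lemma IsHelly.dist_le_one_of_adj_closer (hH : IsHelly G) (hconn : G.Connected)
    (hC4 : C4Free G) {s w c₁ c₂ : V} (h₁ : G.Adj w c₁) (h₂ : G.Adj w c₂)
    (hs₁ : G.dist s c₁ + 1 = G.dist s w) (hs₂ : G.dist s c₂ + 1 = G.dist s w) :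
    G.dist c₁ c₂ ≤ 1 := by
  by_contra! hfar
  have hc₁w : G.dist c₁ w = 1 := dist_eq_one_iff_adj.mpr h₁.symm
  have hwc₂ : G.dist w c₂ = 1 := dist_eq_one_iff_adj.mpr h₂
  have hc₁₂ : G.dist c₁ c₂ = 2 := by
    have : G.dist c₁ c₂ ≤ G.dist c₁ w + G.dist w c₂ := hconn.dist_triangle
    omega
  have hne₁₂ : c₁ ≠ c₂ := by
    rintro rfl
    simp at hc₁₂
  have hs₁pos : 1 ≤ G.dist s c₁ := by
    by_contra! h0
    have e₁ : s = c₁ := hconn.dist_eq_zero_iff.mp (by omega)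
    have e₂ : s = c₂ := hconn.dist_eq_zero_iff.mp (by omega)
    exact hne₁₂ (e₁.symm.trans e₂)
  obtain ⟨m, hm₁, hm₂, hsm⟩ := hH.exists_dist_le₃ hconn (a := c₁) (b := c₂) (c := s)
    (ra := 1) (rb := 1) (rc := G.dist s c₁ - 1) (by omega)
    (by rw [SimpleGraph.dist_comm]; omega) (by rw [SimpleGraph.dist_comm]; omega)
  have hm_ne {c : V} (hc : G.dist s c + 1 = G.dist s w) : c ≠ m := by
    rintro rfl
    omega
  have hwm : 2 ≤ G.dist m w := by
    have : G.dist s w ≤ G.dist s m + G.dist m w := hconn.dist_triangle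
    omega
  have hne_wm : w ≠ m := by
    rintro rfl
    simp at hwm
  have hnadj_wm : ¬ G.Adj w m := fun h => by
    rw [SimpleGraph.dist_comm, dist_eq_one_iff_adj.mpr h] at hwm
    omega
  have hnadj₁₂ : ¬ G.Adj c₁ c₂ := fun h => by
    rw [dist_eq_one_iff_adj.mpr h] at hc₁₂
    omega
  have hadj₁ := hconn.adj_of_dist_le_one hm₁ (hm_ne hs₁)
  have hadj₂ := hconn.adj_of_dist_le_one hm₂ (hm_ne hs₂)
  exact hC4 ⟨w, c₁, m, c₂, h₁.ne, hne_wm, h₂.ne,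
    hadj₁.ne, hne₁₂, hadj₂.ne.symm, h₁, hadj₁, hadj₂.symm, h₂.symm, hnadj_wm, hnadj₁₂⟩

end HellyGraph

/-- In a finite connected C4-free Helly graph, if `v` is most distant
from an arbitrary vertex `s`, `(x,y)` is a diametral pair and
`max{dist(v,x), dist(v,y)} ≤ 2k`, then `diam(G) ≤ 2k + 1`. -/
theorem stmt6 (G : SimpleGraph V) [Fintype V] (hconn : G.Connected) (hH : IsHelly G)
    (hC4 : C4Free G) (s v x y : V)
    (hv : G.dist s v = ecc G s) (hxy : G.dist x y = gdiam G)
    (k : ℕ) (hk : max (G.dist v x) (G.dist v y) ≤ 2 * k) :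
    gdiam G ≤ 2 * k + 1 := by
  rw [← hxy]
  by_contra! hD
  have hvx : G.dist v x ≤ 2 * k := le_of_max_le_left hk
  have hvy : G.dist v y ≤ 2 * k := le_of_max_le_right hk
  have hxvy : G.dist x y ≤ G.dist x v + G.dist v y := hconn.dist_triangle
  have hxv : G.dist x v = G.dist v x := SimpleGraph.dist_comm
  obtain ⟨w, hxw, hyw, hvw⟩ := hH.exists_dist_le₃ hconn (a := x) (b := y) (c := v)
    (ra := G.dist x y / 2) (rb := G.dist x y - G.dist x y / 2) (rc := k - 1) (by omega)
    (by rw [SimpleGraph.dist_comm]; omega) (by rw [SimpleGraph.dist_comm]; omega)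
  have hsvw : G.dist s v ≤ G.dist s w + G.dist w v := hconn.dist_triangle
  have hxwy : G.dist x y ≤ G.dist x w + G.dist w y := hconn.dist_triangle
  rw [SimpleGraph.dist_comm (u := w)] at hsvw hxwy
  have hsx := dist_le_ecc (G := G) s x
  have hsy := dist_le_ecc (G := G) s y
  obtain ⟨c₁, hwc₁, hxc₁, hsc₁⟩ := hH.exists_adj_closer_to_both hconn (x := x) (s := s) (w := w)
    (by omega) (by omega)
  obtain ⟨c₂, hwc₂, hyc₂, hsc₂⟩ := hH.exists_adj_closer_to_both hconn (x := y) (s := s) (w := w)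
    (by omega) (by omega)
  have hc₁₂ := hH.dist_le_one_of_adj_closer hconn hC4 hwc₁ hwc₂ hsc₁ hsc₂
  have hxc₂ : G.dist x c₂ ≤ G.dist x c₁ + G.dist c₁ c₂ := hconn.dist_triangle
  have hxy' : G.dist x y ≤ G.dist x c₂ + G.dist c₂ y := hconn.dist_triangle
  rw [SimpleGraph.dist_comm (u := c₂)] at hxy'
  omega
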